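/- arXiv:1801.07148 — 2 statements merged into one kernel-verified Lean document; each statement's English description precedes it below -/
import Mathlib

section
/- Let ν be a nonnegative finite symmetric Borel measure on ℝ^N, and let φ : ℝ → ℝ be nondecreasing and globally Lipschitz with Lipschitz constant L_φ satisfying L_φ · ν(ℝ^N) ≤ 1. If ψ, ψ̂ ∈ L^∞(ℝ^N) and (ψ − ψ̂)^+ ∈ L^1(ℝ^N), then ∫_{ℝ^N} (T^exp[ψ](x) − T^exp[ψ̂](x))^+ dx ≤ ∫_{ℝ^N} (ψ(x) − ψ̂(x))^+ dx, where a^+ := max(a, 0). -/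
/-! With `m = ν(ℝ^N)` the scheme splits as `T^exp[ψ](x) = ρ(ψ(x)) + ∫ φ(ψ(x+z)) dν(z)`, where
`ρ(u) = u - m φ(u)`. Under `L m ≤ 1` the map `ρ` is nondecreasing, which yields the pointwise
identity `(ρ u - ρ v)⁺ + m (φ u - φ v)⁺ = (u - v)⁺`. The positive part of
`T^exp[ψ] - T^exp[ψ']` is at most `(ρ∘ψ - ρ∘ψ')⁺ + ∫ (φ∘ψ - φ∘ψ')⁺(x+z) dν(z)`; after integrating
in `x`, translation invariance of Lebesgue measure turns the nonlocal term into
`m ∫ (φ∘ψ - φ∘ψ')⁺`, which the identity absorbs. -/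

open MeasureTheory ENNReal
open scoped ENNReal NNReal

noncomputable section

/-- The zero-order Lévy operator `L^ν[ψ](x) := ∫ (ψ(x+z) − ψ(x)) dν(z)`. -/
def Lnu {N : ℕ} (ν : Measure (EuclideanSpace ℝ (Fin N)))
    (ψ : EuclideanSpace ℝ (Fin N) → ℝ) (x : EuclideanSpace ℝ (Fin N)) : ℝ :=
  ∫ z, (ψ (x + z) - ψ x) ∂ν

/-- The explicit-step operator `T^exp[ψ](x) := ψ(x) + L^ν[φ∘ψ](x)`. -/
def Texp {N : ℕ} (ν : Measure (EuclideanSpace ℝ (Fin N))) (φ : ℝ → ℝ)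
    (ψ : EuclideanSpace ℝ (Fin N) → ℝ) (x : EuclideanSpace ℝ (Fin N)) : ℝ :=
  ψ x + Lnu ν (fun y => φ (ψ y)) x

open Filter

section TranslationAverage

variable {G : Type*} [MeasurableSpace G] [AddGroup G] [MeasurableAdd₂ G]
  {μ ν : Measure G} [SFinite μ] [SFinite ν] [μ.IsAddRightInvariant]

theorem ae_ae_add_of_ae {p : G → Prop} (h : ∀ᵐ y ∂μ, p y) : ∀ᵐ x ∂μ, ∀ᵐ z ∂ν, p (x + z) :=
  Measure.ae_ae_of_ae_prod <|
    (Measure.quasiMeasurePreserving_fst.comp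
      (measurePreserving_add_prod μ ν).quasiMeasurePreserving).ae h

theorem lintegral_lintegral_add_right {f : G → ℝ≥0∞} (hf : AEMeasurable f μ) :
    ∫⁻ x, ∫⁻ z, f (x + z) ∂ν ∂μ = ν Set.univ * ∫⁻ x, f x ∂μ := by
  have hmk : ∀ᵐ x ∂μ, ∫⁻ z, f (x + z) ∂ν = ∫⁻ z, hf.mk f (x + z) ∂ν := by
    filter_upwards [ae_ae_add_of_ae (ν := ν) hf.ae_eq_mk] with x hx using lintegral_congr_ae hx
  rw [lintegral_congr_ae hmk, lintegral_lintegral_swap, lintegral_congr_ae hf.ae_eq_mk]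
  · simp_rw [lintegral_add_right_eq_self, lintegral_const, mul_comm]
  · exact (hf.measurable_mk.comp measurable_add).aemeasurable

theorem ae_integrable_comp_add_right [IsFiniteMeasure ν] {E : Type*} [NormedAddCommGroup E]
    {f : G → E} (hf : MemLp f ∞ μ) : ∀ᵐ x ∂μ, Integrable (fun z => f (x + z)) ν := by
  filter_upwards [ae_ae_add_of_ae (ν := ν) (hf.1.ae_eq_mk.and (ae_le_lpNorm_exponent_top hf))]
    with x hx
  refine Integrable.of_bound ?_ _ (hx.mono fun z hz => hz.2)
  exact (hf.1.stronglyMeasurable_mk.comp_measurable (measurable_const_add x)).aestronglyMeasurable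
    |>.congr (hx.mono fun z hz => hz.1.symm)

end TranslationAverage

theorem ofReal_integral_le_lintegral_ofReal {α : Type*} [MeasurableSpace α] {μ : Measure α}
    (f : α → ℝ) : ENNReal.ofReal (∫ x, f x ∂μ) ≤ ∫⁻ x, ENNReal.ofReal (f x) ∂μ := by
  by_cases hf : Integrable f μ
  · calc ENNReal.ofReal (∫ x, f x ∂μ) ≤ ENNReal.ofReal (∫ x, max (f x) 0 ∂μ) :=
          ENNReal.ofReal_le_ofReal (integral_mono hf hf.pos_part fun x => le_max_left _ _)
      _ = ∫⁻ x, ENNReal.ofReal (max (f x) 0) ∂μ :=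
          ofReal_integral_eq_lintegral_ofReal hf.pos_part
            (Eventually.of_forall fun x => le_max_right _ _)
      _ = ∫⁻ x, ENNReal.ofReal (f x) ∂μ := by simp
  · simp [integral_undef hf]

theorem LipschitzWith.comp_memLp_top {α : Type*} [MeasurableSpace α] {μ : Measure α}
    {φ : ℝ → ℝ} {L : ℝ≥0} (hLip : LipschitzWith L φ) {ψ : α → ℝ} (hψ : MemLp ψ ∞ μ) :
    MemLp (fun x => φ (ψ x)) ∞ μ := by
  refine memLp_top_of_bound (hLip.continuous.comp_aestronglyMeasurable hψ.1)
    (‖φ 0‖ + L * lpNorm ψ ∞ μ) ?_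
  filter_upwards [ae_le_lpNorm_exponent_top hψ] with x hx
  calc ‖φ (ψ x)‖ ≤ ‖φ 0‖ + ‖φ (ψ x) - φ 0‖ := norm_le_norm_add_norm_sub' _ _
    _ ≤ ‖φ 0‖ + L * ‖ψ x - 0‖ := by gcongr; exact hLip.norm_sub_le _ _
    _ ≤ ‖φ 0‖ + L * lpNorm ψ ∞ μ := by rw [sub_zero]; gcongr

theorem Monotone.ofReal_sub_mul_sub_add_ofReal_mul_sub {φ : ℝ → ℝ} (hmono : Monotone φ)
    {L : ℝ≥0} (hLip : LipschitzWith L φ) {m : ℝ} (hm : 0 ≤ m) (hmL : L * m ≤ 1) (u v : ℝ) :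
    ENNReal.ofReal (u - m * φ u - (v - m * φ v)) + ENNReal.ofReal m * ENNReal.ofReal (φ u - φ v) =
      ENNReal.ofReal (u - v) := by
  have hLip' : |φ u - φ v| ≤ L * |u - v| := by
    simpa only [Real.dist_eq] using hLip.dist_le_mul u v
  rcases le_total v u with huv | huv
  · have hφ : 0 ≤ φ u - φ v := sub_nonneg.2 (hmono huv)
    rw [abs_of_nonneg hφ, abs_of_nonneg (sub_nonneg.2 huv)] at hLip'
    rw [← ENNReal.ofReal_mul hm, ← ENNReal.ofReal_add (by nlinarith) (by positivity)]
    ring_nf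
  · have hφ : φ u - φ v ≤ 0 := sub_nonpos.2 (hmono huv)
    rw [abs_of_nonpos hφ, abs_of_nonpos (sub_nonpos.2 huv)] at hLip'
    rw [ENNReal.ofReal_of_nonpos (by nlinarith), ENNReal.ofReal_of_nonpos hφ,
      ENNReal.ofReal_of_nonpos (sub_nonpos.2 huv), mul_zero, add_zero]

section Texp

variable {N : ℕ} (ν : Measure (EuclideanSpace ℝ (Fin N))) [IsFiniteMeasure ν]

theorem Lnu_eq_integral_sub {f : EuclideanSpace ℝ (Fin N) → ℝ} {x : EuclideanSpace ℝ (Fin N)}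
    (hf : Integrable (fun z => f (x + z)) ν) :
    Lnu ν f x = ∫ z, f (x + z) ∂ν - ν.real Set.univ * f x := by
  rw [Lnu, integral_sub hf (integrable_const _), integral_const, smul_eq_mul]

theorem ofReal_Texp_sub_Texp_le (φ : ℝ → ℝ) {ψ ψ' : EuclideanSpace ℝ (Fin N) → ℝ}
    {x : EuclideanSpace ℝ (Fin N)} (hint : Integrable (fun z => φ (ψ (x + z))) ν)
    (hint' : Integrable (fun z => φ (ψ' (x + z))) ν) :
    ENNReal.ofReal (Texp ν φ ψ x - Texp ν φ ψ' x) ≤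
      ENNReal.ofReal (ψ x - ν.real Set.univ * φ (ψ x) - (ψ' x - ν.real Set.univ * φ (ψ' x))) +
        ∫⁻ z, ENNReal.ofReal (φ (ψ (x + z)) - φ (ψ' (x + z))) ∂ν := by
  have hT : Texp ν φ ψ x - Texp ν φ ψ' x =
      ψ x - ν.real Set.univ * φ (ψ x) - (ψ' x - ν.real Set.univ * φ (ψ' x)) +
        ∫ z, (φ (ψ (x + z)) - φ (ψ' (x + z))) ∂ν := by
    rw [Texp, Texp, Lnu_eq_integral_sub ν hint, Lnu_eq_integral_sub ν hint',
      integral_sub hint hint']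
    ring
  rw [hT]
  exact ENNReal.ofReal_add_le.trans (add_le_add_right (ofReal_integral_le_lintegral_ofReal _) _)

end Texp

theorem stmt3_general {N : ℕ}
    (ν : Measure (EuclideanSpace ℝ (Fin N))) [IsFiniteMeasure ν]
    (φ : ℝ → ℝ) (hmono : Monotone φ)
    (L : ℝ≥0) (hLip : LipschitzWith L φ)
    (hCFL : (L : ℝ≥0∞) * ν Set.univ ≤ 1)
    (ψ ψ' : EuclideanSpace ℝ (Fin N) → ℝ)
    (hψ : MemLp ψ ∞ volume) (hψ' : MemLp ψ' ∞ volume) :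
    ∫⁻ x, ENNReal.ofReal (max (Texp ν φ ψ x - Texp ν φ ψ' x) 0) ∂volume ≤
      ∫⁻ x, ENNReal.ofReal (max (ψ x - ψ' x) 0) ∂volume := by
  set m := ν.real Set.univ
  have hmL : L * m ≤ 1 := by
    simpa [m, measureReal_def, ENNReal.toReal_mul] using
      ENNReal.toReal_mono ENNReal.one_ne_top hCFL
  have hφ := hLip.continuous.measurable
  have hψm := hψ.1.aemeasurable
  have hψm' := hψ'.1.aemeasurable
  have hlocal : AEMeasurable (fun x => ENNReal.ofReal (ψ x - m * φ (ψ x) - (ψ' x - m * φ (ψ' x))))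
      volume := by fun_prop
  have hflux : AEMeasurable (fun x => ENNReal.ofReal (φ (ψ x) - φ (ψ' x))) volume := by fun_prop
  simp only [ENNReal.ofReal_max, ENNReal.ofReal_zero, max_zero]
  calc ∫⁻ x, ENNReal.ofReal (Texp ν φ ψ x - Texp ν φ ψ' x)
      ≤ ∫⁻ x, ENNReal.ofReal (ψ x - m * φ (ψ x) - (ψ' x - m * φ (ψ' x))) +
          ∫⁻ z, ENNReal.ofReal (φ (ψ (x + z)) - φ (ψ' (x + z))) ∂ν := by
        refine lintegral_mono_ae ?_
        filter_upwards [ae_integrable_comp_add_right (ν := ν) (hLip.comp_memLp_top hψ),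
          ae_integrable_comp_add_right (ν := ν) (hLip.comp_memLp_top hψ')] with x hx hx'
        exact ofReal_Texp_sub_Texp_le ν φ hx hx'
    _ = (∫⁻ x, ENNReal.ofReal (ψ x - m * φ (ψ x) - (ψ' x - m * φ (ψ' x)))) +
          ν Set.univ * ∫⁻ x, ENNReal.ofReal (φ (ψ x) - φ (ψ' x)) := by
        rw [lintegral_add_left' hlocal, lintegral_lintegral_add_right hflux]
    _ = ∫⁻ x, ENNReal.ofReal (ψ x - ψ' x) := by
        rw [← lintegral_const_mul' _ _ (measure_ne_top ν _), ← lintegral_add_left' hlocal,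
          ← ofReal_measureReal]
        exact lintegral_congr fun x => hmono.ofReal_sub_mul_sub_add_ofReal_mul_sub hLip
          measureReal_nonneg hmL _ _

theorem stmt3 {N : ℕ} (hN : 1 ≤ N)
    (ν : Measure (EuclideanSpace ℝ (Fin N))) [IsFiniteMeasure ν]
    (hsym : ν.map (fun z => -z) = ν)
    (φ : ℝ → ℝ) (hmono : Monotone φ)
    (L : ℝ≥0) (hLip : LipschitzWith L φ)
    (hCFL : (L : ℝ≥0∞) * ν Set.univ ≤ 1)
    (ψ ψ' : EuclideanSpace ℝ (Fin N) → ℝ)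
    (hψ : MemLp ψ ∞ volume) (hψ' : MemLp ψ' ∞ volume)
    (hpos : Integrable (fun x => max (ψ x - ψ' x) 0) volume) :
    ∫⁻ x, ENNReal.ofReal (max (Texp ν φ ψ x - Texp ν φ ψ' x) 0) ∂volume ≤
      ∫⁻ x, ENNReal.ofReal (max (ψ x - ψ' x) 0) ∂volume :=
  stmt3_general ν φ hmono L hLip hCFL ψ ψ' hψ hψ'
end
end

section
/- Under the scheme assumptions, assume in addition that φ_1 is locally Lipschitz, and let (U^j) be a solution of the scheme with data (u_0, f). Then the scheme is conservative: for every j = 0,...,J, ∫_{ℝ^N} U^j(x) dx = ∫_{ℝ^N} u_0(x) dx + ∫_0^{t_j} ∫_{ℝ^N} f(x,τ) dx dτ. -/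
/-! Integrating the scheme over `ℝᴺ` kills both nonlocal terms: for `ψ ∈ L¹` and a finite measure
`ν`, the shear `(x, z) ↦ (x + z, z)` preserves `dx ⊗ ν`, so by Fubini
`∫∫ (ψ (x + z) - ψ x) dν(z) dx = 0`. This applies to `ψ = φᵢ ∘ U^j` because `φᵢ` is Lipschitz on the
ball containing the essential range of `U^j ∈ L^∞` and vanishes at `0`, so `|φᵢ ∘ U^j| ≤ K |U^j|`.
What remains is `∫ U^j = ∫ U^{j-1} + Δtⱼ ∫ F^j`, and `Δtⱼ ∫ F^j = ∫_{(t_{j-1}, t_j]} ∫ f` by Fubini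
again; the claim follows by summing over the steps. -/

open MeasureTheory ENNReal
open scoped ENNReal NNReal

noncomputable section

/-- The time-averaged source term
`F^j(x) := (1/Δt_j) ∫_{t_{j−1}}^{t_j} f(x,t) dt`. -/
def Favg {N : ℕ} (t : ℕ → ℝ) (f : EuclideanSpace ℝ (Fin N) → ℝ → ℝ)
    (j : ℕ) (x : EuclideanSpace ℝ (Fin N)) : ℝ :=
  (t j - t (j - 1))⁻¹ * ∫ τ in Set.Ioc (t (j - 1)) (t j), f x τ

/-- `U = (U^j)_{j=0}^J` is a solution of the numerical scheme
`U^j = U^{j−1} + Δt_j (L^{ν₁}[φ₁∘U^j] + L^{ν₂}[φ₂∘U^{j−1}] + F^j)` with data `u₀, f`: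
each `U^j ∈ L¹ ∩ L^∞`, `U^0 = u₀` a.e., and each step holds a.e. -/
def IsSchemeSol {N : ℕ} (ν₁ ν₂ : Measure (EuclideanSpace ℝ (Fin N)))
    (φ₁ φ₂ : ℝ → ℝ) (t : ℕ → ℝ) (J : ℕ)
    (u₀ : EuclideanSpace ℝ (Fin N) → ℝ) (f : EuclideanSpace ℝ (Fin N) → ℝ → ℝ)
    (U : ℕ → EuclideanSpace ℝ (Fin N) → ℝ) : Prop :=
  (∀ j ≤ J, Integrable (U j) volume ∧ MemLp (U j) ∞ volume) ∧
  U 0 =ᵐ[volume] u₀ ∧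
  ∀ j, 1 ≤ j → j ≤ J →
    ∀ᵐ x ∂(volume : Measure (EuclideanSpace ℝ (Fin N))),
      U j x = U (j - 1) x + (t j - t (j - 1)) *
        (Lnu ν₁ (fun y => φ₁ (U j y)) x + Lnu ν₂ (fun y => φ₂ (U (j - 1) y)) x +
          Favg t f j x)

section Translation

variable {G E : Type*} [MeasurableSpace G] [AddGroup G] [MeasurableAdd₂ G]
  [NormedAddCommGroup E]
  {μ ν : Measure G} [SFinite μ] [μ.IsAddRightInvariant] [IsFiniteMeasure ν] {ψ : G → E}

lemma integrable_comp_add_prod (hψ : Integrable ψ μ) :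
    Integrable (fun p : G × G => ψ (p.1 + p.2)) (μ.prod ν) :=
  (measurePreserving_add_prod μ ν).integrable_comp_of_integrable (hψ.comp_fst ν)

lemma integral_comp_add_prod [NormedSpace ℝ E] (hψ : Integrable ψ μ) :
    ∫ p : G × G, ψ (p.1 + p.2) ∂(μ.prod ν) = ∫ p : G × G, ψ p.1 ∂(μ.prod ν) := by
  have h := measurePreserving_add_prod μ ν
  conv_rhs => rw [← h.map_eq]
  exact (integral_map h.measurable.aemeasurable
    (h.map_eq ▸ (hψ.comp_fst ν).aestronglyMeasurable)).symm

lemma integrable_integral_sub_comp_add [NormedSpace ℝ E] (hψ : Integrable ψ μ) :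
    Integrable (fun x => ∫ z, (ψ (x + z) - ψ x) ∂ν) μ :=
  ((integrable_comp_add_prod hψ).sub (hψ.comp_fst ν)).integral_prod_left

lemma integral_integral_sub_comp_add [NormedSpace ℝ E] (hψ : Integrable ψ μ) :
    ∫ x, ∫ z, (ψ (x + z) - ψ x) ∂ν ∂μ = 0 := by
  rw [← integral_prod (fun p : G × G => ψ (p.1 + p.2) - ψ p.1)
      ((integrable_comp_add_prod hψ).sub (hψ.comp_fst ν)),
    integral_sub (integrable_comp_add_prod hψ) (hψ.comp_fst ν), integral_comp_add_prod hψ,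
    sub_self]

end Translation

lemma LocallyLipschitz.integrable_comp {α E F : Type*} [MeasurableSpace α] {μ : Measure α}
    [NormedAddCommGroup E] [ProperSpace E] [NormedAddCommGroup F] {φ : E → F} {U : α → E}
    (hφ : LocallyLipschitz φ) (hφ0 : φ 0 = 0) (hU : Integrable U μ) (hU' : MemLp U ∞ μ) :
    Integrable (fun x => φ (U x)) μ := by
  obtain ⟨K, hK⟩ := hφ.locallyLipschitzOn.exists_lipschitzOnWith_of_compact
    (isCompact_closedBall (0 : E) (lpNorm U ∞ μ))
  have hlin : ∀ u ∈ Metric.closedBall (0 : E) (lpNorm U ∞ μ), ‖φ u‖ ≤ K * ‖u‖ := fun u hu => by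
    simpa [hφ0] using hK.dist_le_mul u hu 0 (Metric.mem_closedBall_self lpNorm_nonneg)
  refine (hU.norm.const_mul K).mono' (hφ.continuous.comp_aestronglyMeasurable
    hU.aestronglyMeasurable) ?_
  filter_upwards [ae_le_lpNorm_exponent_top hU'] with x hx
  exact hlin (U x) (by simpa using hx)

lemma integrable_uncurry_of_lintegral_eLpNorm_lt_top {α β E : Type*} [MeasurableSpace α]
    [MeasurableSpace β] [NormedAddCommGroup E] {μ : Measure α} {ν : Measure β}
    [SFinite μ] [SFinite ν] {f : α → β → E}
    (hf : AEStronglyMeasurable (Function.uncurry f) (μ.prod ν))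
    (h : ∫⁻ y, eLpNorm (f · y) 1 μ ∂ν < ∞) : Integrable (Function.uncurry f) (μ.prod ν) := by
  refine ⟨hf, ?_⟩
  rw [HasFiniteIntegral, lintegral_prod_symm _ hf.enorm]
  simpa [eLpNorm_one_eq_lintegral_enorm] using h

lemma setIntegral_Ioc_add_setIntegral_Ioc {E : Type*} [NormedAddCommGroup E] [NormedSpace ℝ E]
    {g : ℝ → E} {a b c : ℝ} (hab : a ≤ b) (hbc : b ≤ c) (hg : IntegrableOn g (Set.Ioc a c)) :
    (∫ τ in Set.Ioc a b, g τ) + ∫ τ in Set.Ioc b c, g τ = ∫ τ in Set.Ioc a c, g τ := by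
  rw [← setIntegral_union (Set.Ioc_disjoint_Ioc_of_le le_rfl) measurableSet_Ioc
    (hg.mono_set (Set.Ioc_subset_Ioc_right hbc)) (hg.mono_set (Set.Ioc_subset_Ioc_left hab)),
    Set.Ioc_union_Ioc_eq_Ioc hab hbc]

section Scheme

variable {N : ℕ} {t : ℕ → ℝ} {f : EuclideanSpace ℝ (Fin N) → ℝ → ℝ} {j : ℕ}

lemma integrable_Favg
    (hf : Integrable (Function.uncurry f)
      (volume.prod (volume.restrict (Set.Ioc (t (j - 1)) (t j))))) :
    Integrable (Favg t f j) volume :=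
  hf.integral_prod_left.const_mul _

lemma integral_Favg
    (hf : Integrable (Function.uncurry f)
      (volume.prod (volume.restrict (Set.Ioc (t (j - 1)) (t j))))) :
    ∫ x, Favg t f j x = (t j - t (j - 1))⁻¹ * ∫ τ in Set.Ioc (t (j - 1)) (t j), ∫ x, f x τ := by
  unfold Favg
  rw [integral_const_mul, integral_integral_swap hf]

variable {ν : Measure (EuclideanSpace ℝ (Fin N))} [IsFiniteMeasure ν]
  {ψ : EuclideanSpace ℝ (Fin N) → ℝ}

lemma integrable_Lnu (hψ : Integrable ψ volume) : Integrable (Lnu ν ψ) volume :=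
  integrable_integral_sub_comp_add hψ

lemma integral_Lnu (hψ : Integrable ψ volume) : ∫ x, Lnu ν ψ x = 0 :=
  integral_integral_sub_comp_add hψ

lemma IsSchemeSol.integral_succ {ν₁ ν₂ : Measure (EuclideanSpace ℝ (Fin N))}
    [IsFiniteMeasure ν₁] [IsFiniteMeasure ν₂] {φ₁ φ₂ : ℝ → ℝ} {J : ℕ}
    {u₀ : EuclideanSpace ℝ (Fin N) → ℝ} {U : ℕ → EuclideanSpace ℝ (Fin N) → ℝ}
    (hU : IsSchemeSol ν₁ ν₂ φ₁ φ₂ t J u₀ f U)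
    (hφ₁ : LocallyLipschitz φ₁) (hφ₁0 : φ₁ 0 = 0) (hφ₂ : LocallyLipschitz φ₂) (hφ₂0 : φ₂ 0 = 0)
    (hj : j + 1 ≤ J) (hΔ : t j ≠ t (j + 1))
    (hf : Integrable (Function.uncurry f)
      (volume.prod (volume.restrict (Set.Ioc (t j) (t (j + 1)))))) :
    ∫ x, U (j + 1) x = (∫ x, U j x) + ∫ τ in Set.Ioc (t j) (t (j + 1)), ∫ x, f x τ := by
  obtain ⟨hreg, -, hstep⟩ := hU
  have hψ₁ := hφ₁.integrable_comp hφ₁0 (hreg (j + 1) hj).1 (hreg (j + 1) hj).2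
  have hψ₂ := hφ₂.integrable_comp hφ₂0 (hreg j (by omega)).1 (hreg j (by omega)).2
  have hL₁ := integrable_Lnu (ν := ν₁) hψ₁
  have hL₂ := integrable_Lnu (ν := ν₂) hψ₂
  have hL : Integrable (fun x => Lnu ν₁ (fun y => φ₁ (U (j + 1) y)) x
      + Lnu ν₂ (fun y => φ₂ (U j y)) x) volume := hL₁.add hL₂
  have hF : Integrable (Favg t f (j + 1)) volume := integrable_Favg hf
  have hS : Integrable (fun x => Lnu ν₁ (fun y => φ₁ (U (j + 1) y)) x
      + Lnu ν₂ (fun y => φ₂ (U j y)) x + Favg t f (j + 1) x) volume := hL.add hF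
  calc ∫ x, U (j + 1) x
      = ∫ x, (U j x + (t (j + 1) - t j) * (Lnu ν₁ (fun y => φ₁ (U (j + 1) y)) x
          + Lnu ν₂ (fun y => φ₂ (U j y)) x + Favg t f (j + 1) x)) :=
        integral_congr_ae (hstep (j + 1) (by omega) hj)
    _ = (∫ x, U j x) + (t (j + 1) - t j) * ((∫ x, Lnu ν₁ (fun y => φ₁ (U (j + 1) y)) x)
          + (∫ x, Lnu ν₂ (fun y => φ₂ (U j y)) x) + ∫ x, Favg t f (j + 1) x) := by
        rw [integral_add (hreg j (by omega)).1 (hS.const_mul _), integral_const_mul,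
          integral_add hL hF, integral_add hL₁ hL₂]
    _ = (∫ x, U j x) + ∫ τ in Set.Ioc (t j) (t (j + 1)), ∫ x, f x τ := by
        rw [integral_Lnu hψ₁, integral_Lnu hψ₂, integral_Favg hf, Nat.add_sub_cancel, zero_add,
          zero_add, mul_inv_cancel_left₀ (sub_ne_zero.2 hΔ.symm)]

end Scheme

theorem stmt14_general {N : ℕ} (T : ℝ) (J : ℕ)
    (t : ℕ → ℝ) (ht0 : t 0 = 0) (htJ : t J = T)
    (htmono : ∀ j < J, t j < t (j + 1))
    (u₀ : EuclideanSpace ℝ (Fin N) → ℝ)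
    (f : EuclideanSpace ℝ (Fin N) → ℝ → ℝ)
    (hfmeas : Measurable (Function.uncurry f))
    (hfint : ∫⁻ τ in Set.Ioc 0 T,
        (eLpNorm (fun x => f x τ) 1 volume + eLpNorm (fun x => f x τ) ∞ volume) < ∞)
    (ν₁ ν₂ : Measure (EuclideanSpace ℝ (Fin N)))
    [IsFiniteMeasure ν₁] [IsFiniteMeasure ν₂]
    (φ₁ φ₂ : ℝ → ℝ)
    (hφ₁0 : φ₁ 0 = 0)
    (hφ₁loclip : LocallyLipschitz φ₁)
    (L : ℝ≥0) (hφ₂lip : LipschitzWith L φ₂) (hφ₂0 : φ₂ 0 = 0)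
    (U : ℕ → EuclideanSpace ℝ (Fin N) → ℝ)
    (hU : IsSchemeSol ν₁ ν₂ φ₁ φ₂ t J u₀ f U) :
    ∀ j ≤ J,
      ∫ x, U j x = (∫ x, u₀ x) + ∫ τ in Set.Ioc 0 (t j), ∫ x, f x τ := by
  have hmono : MonotoneOn t (Set.Iic J) := monotoneOn_of_le_succ Set.ordConnected_Iic
    fun a _ _ ha => (htmono a (Order.succ_le_iff.1 ha)).le
  have hf : Integrable (Function.uncurry f) (volume.prod (volume.restrict (Set.Ioc 0 T))) :=
    integrable_uncurry_of_lintegral_eLpNorm_lt_top hfmeas.aestronglyMeasurable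
      ((lintegral_mono fun _ => le_self_add).trans_lt hfint)
  have hg : IntegrableOn (fun τ => ∫ x, f x τ) (Set.Ioc 0 T) := hf.integral_prod_right
  intro j hj
  induction j with
  | zero => simpa [ht0] using integral_congr_ae hU.2.1
  | succ j ih =>
    have h0j : 0 ≤ t j := ht0 ▸ hmono (Set.mem_Iic.2 (Nat.zero_le J)) (Set.mem_Iic.2 (by omega))
      (Nat.zero_le j)
    have hjj : t j < t (j + 1) := htmono j hj
    have hjT : t (j + 1) ≤ T := htJ ▸ hmono (Set.mem_Iic.2 hj) (Set.mem_Iic.2 le_rfl) hj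
    rw [hU.integral_succ hφ₁loclip hφ₁0 hφ₂lip.locallyLipschitz hφ₂0 hj hjj.ne
      (hf.mono_measure (Measure.prod_mono le_rfl
        (Measure.restrict_mono (Set.Ioc_subset_Ioc h0j hjT) le_rfl))),
      ih (by omega), add_assoc, setIntegral_Ioc_add_setIntegral_Ioc h0j hjj.le
        (hg.mono_set (Set.Ioc_subset_Ioc_right hjT))]

theorem stmt14 {N : ℕ} (hN : 1 ≤ N)
    (T : ℝ) (hT : 0 < T) (J : ℕ) (hJ : 1 ≤ J)
    (t : ℕ → ℝ) (ht0 : t 0 = 0) (htJ : t J = T)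
    (htmono : ∀ j < J, t j < t (j + 1))
    (u₀ : EuclideanSpace ℝ (Fin N) → ℝ)
    (hu₀1 : Integrable u₀ volume) (hu₀inf : MemLp u₀ ∞ volume)
    (f : EuclideanSpace ℝ (Fin N) → ℝ → ℝ)
    (hfmeas : Measurable (Function.uncurry f))
    (hfint : ∫⁻ τ in Set.Ioc 0 T,
        (eLpNorm (fun x => f x τ) 1 volume + eLpNorm (fun x => f x τ) ∞ volume) < ∞)
    (ν₁ ν₂ : Measure (EuclideanSpace ℝ (Fin N)))
    [IsFiniteMeasure ν₁] [IsFiniteMeasure ν₂]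
    (hsym₁ : ν₁.map (fun z => -z) = ν₁) (hsym₂ : ν₂.map (fun z => -z) = ν₂)
    (φ₁ φ₂ : ℝ → ℝ)
    (hφ₁cont : Continuous φ₁) (hφ₁mono : Monotone φ₁) (hφ₁0 : φ₁ 0 = 0)
    (hφ₁loclip : LocallyLipschitz φ₁)
    (L : ℝ≥0) (hφ₂lip : LipschitzWith L φ₂) (hφ₂mono : Monotone φ₂) (hφ₂0 : φ₂ 0 = 0)
    (hCFL : ∀ j, 1 ≤ j → j ≤ J →
      ENNReal.ofReal (t j - t (j - 1)) * (L : ℝ≥0∞) * ν₂ Set.univ ≤ 1)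
    (U : ℕ → EuclideanSpace ℝ (Fin N) → ℝ)
    (hU : IsSchemeSol ν₁ ν₂ φ₁ φ₂ t J u₀ f U) :
    ∀ j ≤ J,
      ∫ x, U j x = (∫ x, u₀ x) + ∫ τ in Set.Ioc 0 (t j), ∫ x, f x τ :=
  stmt14_general T J t ht0 htJ htmono u₀ f hfmeas hfint ν₁ ν₂ φ₁ φ₂ hφ₁0 hφ₁loclip L hφ₂lip hφ₂0 U
    hU
end
end
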